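/- Let {X_n}_{n∈ℕ₀} be a stochastic process adapted to a filtration {F_n}, X_0 constant, with E[X_{n+1}|F_n] ≤ X_n − ε a.s. (ε > 0) and X_{n+1} − X_n ∈ [a,b] a.s. (a < b). Let {B_n}_{n∈ℕ₀} be a strictly increasing sequence of ℕ₀-valued random variables with B_n ≥ n a.s. Then for any c ∈ ℝ, P(X_{B_n} ≥ c) ≤ Σ_{k=n}^{∞} P(X_k ≥ c), and consequently lim_{n→∞} P(X_{B_n} ≥ c) = 0. -/

import Mathlib

/-! For `d ∈ [a, b]`, convexity bounds `exp (t * d)` by the chord `expChord a b t d`, which is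
affine and (for `t ≥ 0`) nondecreasing in `d`. Pulling the `ℱ n`-measurable factor
`exp (t * X n)` out of the conditional expectation and using the drift `≤ -ε` of the increment
gives `E[exp (t * X (n + 1))] ≤ q * E[exp (t * X n)]` with `q = expChord a b t (-ε)`. As a
function of `t`, the chord at `-ε` equals `1` at `t = 0` with derivative `-ε`, so `q < 1` for
some `t > 0`, and Markov's inequality makes `P(X n ≥ c)` decay geometrically. Finally
`{X (B n) ≥ c} ⊆ ⋃ k, {X (n + k) ≥ c}` since `B n ≥ n`, and the tails of a finite sum vanish. -/

open MeasureTheory Filter Topology Real Set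

noncomputable def expChord (a b t d : ℝ) : ℝ :=
  exp (t * a) + (exp (t * b) - exp (t * a)) / (b - a) * (d - a)

lemma exp_mul_le_expChord {a b t d : ℝ} (hd : d ∈ Icc a b) : exp (t * d) ≤ expChord a b t d := by
  obtain ⟨had, hdb⟩ := hd
  rcases (had.trans hdb).eq_or_lt with rfl | hab
  · simp [expChord, le_antisymm hdb had]
  have hba : 0 < b - a := sub_pos.2 hab
  have h := convexOn_exp.2 (mem_univ (t * a)) (mem_univ (t * b))
    (div_nonneg (sub_nonneg.2 hdb) hba.le) (div_nonneg (sub_nonneg.2 had) hba.le)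
    (by field_simp; ring)
  simp only [smul_eq_mul] at h
  have hpt : (b - d) / (b - a) * (t * a) + (d - a) / (b - a) * (t * b) = t * d := by
    field_simp; ring
  have hval : (b - d) / (b - a) * exp (t * a) + (d - a) / (b - a) * exp (t * b) =
      expChord a b t d := by
    simp only [expChord]; field_simp; ring
  rwa [hpt, hval] at h

lemma expChord_slope_nonneg {a b t : ℝ} (hab : a ≤ b) (ht : 0 ≤ t) :
    0 ≤ (exp (t * b) - exp (t * a)) / (b - a) :=
  div_nonneg (sub_nonneg.2 (exp_le_exp.2 (mul_le_mul_of_nonneg_left hab ht))) (sub_nonneg.2 hab)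

lemma expChord_pos {a b t d : ℝ} (hab : a ≤ b) (ht : 0 ≤ t) (had : a ≤ d) :
    0 < expChord a b t d :=
  add_pos_of_pos_of_nonneg (exp_pos _)
    (mul_nonneg (expChord_slope_nonneg hab ht) (sub_nonneg.2 had))

lemma hasDerivAt_expChord_zero {a b d : ℝ} (hab : a < b) :
    HasDerivAt (fun t => expChord a b t d) d 0 := by
  have hexp (x : ℝ) : HasDerivAt (fun t => exp (t * x)) x 0 := by
    simpa using (hasDerivAt_mul_const (x := (0 : ℝ)) x).exp
  have h := (hexp a).add (((hexp b).sub (hexp a)).div_const (b - a) |>.mul_const (d - a))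
  rwa [div_self (sub_ne_zero.2 hab.ne'), one_mul, add_sub_cancel] at h

lemma exists_pos_expChord_lt_one {a b d : ℝ} (hab : a < b) (hd : d < 0) :
    ∃ t, 0 < t ∧ expChord a b t d < 1 := by
  obtain ⟨t, hslope, ht⟩ :=
    ((hasDerivAt_expChord_zero hab).hasDerivWithinAt.liminf_right_slope_le hd).and_eventually
      self_mem_nhdsWithin |>.exists
  rw [slope_def_field, sub_zero] at hslope
  have hlt := neg_of_div_neg_left hslope ht.le
  exact ⟨t, ht, by simpa [expChord] using hlt⟩

section CondExp

variable {Ω : Type*} {m m0 : MeasurableSpace Ω} {μ : Measure Ω}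

lemma le_of_ae_le_of_condExp_le [IsProbabilityMeasure μ] (hm : m ≤ m0) {D : Ω → ℝ} {a c : ℝ}
    (hD : Integrable D μ) (haD : ∀ᵐ ω ∂μ, a ≤ D ω) (hDc : μ[D|m] ≤ᵐ[μ] fun _ => c) : a ≤ c := by
  have hmean : ∫ ω, μ[D|m] ω ∂μ = ∫ ω, D ω ∂μ := integral_condExp hm
  have hlow : a ≤ ∫ ω, D ω ∂μ := by
    simpa using integral_mono_ae (integrable_const a) hD haD
  have hupp : ∫ ω, μ[D|m] ω ∂μ ≤ c := by
    simpa using integral_mono_ae integrable_condExp (integrable_const c) hDc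
  linarith

lemma condExp_sub_le_of_ae_le_of_condExp_le (hm : m ≤ m0) [SigmaFinite (μ.trim hm)] {f g : Ω → ℝ}
    {ε : ℝ} (hf : Integrable f μ) (hgm : StronglyMeasurable[m] g) (hg : Integrable g μ)
    (h : μ[f|m] ≤ᵐ[μ] fun ω => g ω - ε) : μ[f - g|m] ≤ᵐ[μ] fun _ => -ε := by
  filter_upwards [condExp_sub hf hg m, h] with ω hsub hω
  rw [hsub, Pi.sub_apply, condExp_of_stronglyMeasurable hm hgm hg]
  linarith

lemma integral_mul_le_of_ae_le_of_condExp_le (hm : m ≤ m0) [SigmaFinite (μ.trim hm)] {Y D : Ω → ℝ}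
    {c : ℝ} (hYm : StronglyMeasurable[m] Y) (hY0 : ∀ ω, 0 ≤ Y ω) (hY : Integrable Y μ)
    (hD : Integrable D μ) (hYD : Integrable (Y * D) μ) (hDc : μ[D|m] ≤ᵐ[μ] fun _ => c) :
    ∫ ω, Y ω * D ω ∂μ ≤ c * ∫ ω, Y ω ∂μ := by
  have hpull : μ[Y * D|m] =ᵐ[μ] Y * μ[D|m] := condExp_mul_of_stronglyMeasurable_left hYm hYD hD
  calc ∫ ω, Y ω * D ω ∂μ = ∫ ω, (Y * μ[D|m]) ω ∂μ :=
        (integral_condExp hm).symm.trans (integral_congr_ae hpull)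
    _ ≤ ∫ ω, c * Y ω ∂μ := by
        refine integral_mono_ae (integrable_condExp.congr hpull) (hY.const_mul c) ?_
        filter_upwards [hDc] with ω hω
        simpa [mul_comm c] using mul_le_mul_of_nonneg_left hω (hY0 ω)
    _ = c * ∫ ω, Y ω ∂μ := integral_const_mul c _

lemma MeasureTheory.Integrable.mul_exp_mul_of_ae_le {Y D : Ω → ℝ} {b t : ℝ} (hY : Integrable Y μ)
    (hDm : AEStronglyMeasurable D μ) (ht : 0 ≤ t) (hDb : ∀ᵐ ω ∂μ, D ω ≤ b) :
    Integrable (fun ω => Y ω * exp (t * D ω)) μ :=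
  hY.mul_bdd (c := exp (t * b)) (by fun_prop) <| by
    filter_upwards [hDb] with ω hω
    rw [norm_of_nonneg (exp_pos _).le]
    exact exp_le_exp.2 (mul_le_mul_of_nonneg_left hω ht)

lemma integral_mul_exp_le_expChord_mul [IsFiniteMeasure μ] (hm : m ≤ m0) {Y D : Ω → ℝ}
    {a b c t : ℝ} (hab : a ≤ b) (ht : 0 ≤ t) (hYm : StronglyMeasurable[m] Y)
    (hY0 : ∀ ω, 0 ≤ Y ω) (hY : Integrable Y μ) (hDm : AEStronglyMeasurable D μ)
    (hDab : ∀ᵐ ω ∂μ, D ω ∈ Icc a b) (hDc : μ[D|m] ≤ᵐ[μ] fun _ => c) :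
    ∫ ω, Y ω * exp (t * D ω) ∂μ ≤ expChord a b t c * ∫ ω, Y ω ∂μ := by
  set s := (exp (t * b) - exp (t * a)) / (b - a)
  have hD : Integrable D μ := .of_mem_Icc a b hDm.aemeasurable hDab
  have hYD : Integrable (fun ω => Y ω * D ω) μ := hY.mul_bdd hDm (c := max |a| |b|) <| by
    filter_upwards [hDab] with ω hω using abs_le_max_abs_abs hω.1 hω.2
  have hYexp := hY.mul_exp_mul_of_ae_le hDm ht (hDab.mono fun _ hω => hω.2)
  calc ∫ ω, Y ω * exp (t * D ω) ∂μ
      ≤ ∫ ω, (exp (t * a) - s * a) * Y ω + s * (Y ω * D ω) ∂μ := by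
        refine integral_mono_ae hYexp ((hY.const_mul _).add (hYD.const_mul s)) ?_
        filter_upwards [hDab] with ω hω
        calc Y ω * exp (t * D ω) ≤ Y ω * expChord a b t (D ω) :=
              mul_le_mul_of_nonneg_left (exp_mul_le_expChord hω) (hY0 ω)
          _ = _ := by simp only [expChord, s]; ring
    _ = (exp (t * a) - s * a) * ∫ ω, Y ω ∂μ + s * ∫ ω, Y ω * D ω ∂μ := by
        rw [integral_add (hY.const_mul _) (hYD.const_mul s), integral_const_mul, integral_const_mul]
    _ ≤ (exp (t * a) - s * a) * ∫ ω, Y ω ∂μ + s * (c * ∫ ω, Y ω ∂μ) := by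
        gcongr
        · exact expChord_slope_nonneg hab ht
        · exact integral_mul_le_of_ae_le_of_condExp_le hm hYm hY0 hY hD hYD hDc
    _ = expChord a b t c * ∫ ω, Y ω ∂μ := by simp only [expChord, s]; ring

end CondExp

section Increments

variable {Ω : Type*} {m0 : MeasurableSpace Ω} {μ : Measure Ω} {ℱ : Filtration ℕ m0}
  {X : ℕ → Ω → ℝ} {a b δ t x0 : ℝ}

lemma MeasureTheory.StronglyAdapted.aestronglyMeasurable_succ_sub (hX : StronglyAdapted ℱ X)
    (n : ℕ) : AEStronglyMeasurable (X (n + 1) - X n) μ :=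
  have hXm (k : ℕ) : StronglyMeasurable (X k) := (hX k).mono (ℱ.le k)
  ((hXm (n + 1)).sub (hXm n)).aestronglyMeasurable

lemma integral_exp_mul_succ_le [IsFiniteMeasure μ] (hX : StronglyAdapted ℱ X) (hab : a ≤ b)
    (ht : 0 ≤ t) (n : ℕ) (hint : Integrable (fun ω => exp (t * X n ω)) μ)
    (hdiff : ∀ᵐ ω ∂μ, X (n + 1) ω - X n ω ∈ Icc a b)
    (hdrift : μ[X (n + 1) - X n|ℱ n] ≤ᵐ[μ] fun _ => δ) :
    Integrable (fun ω => exp (t * X (n + 1) ω)) μ ∧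
      ∫ ω, exp (t * X (n + 1) ω) ∂μ ≤ expChord a b t δ * ∫ ω, exp (t * X n ω) ∂μ := by
  have hsplit : (fun ω => exp (t * X (n + 1) ω)) =
      fun ω => exp (t * X n ω) * exp (t * (X (n + 1) - X n) ω) := by
    ext ω
    rw [← exp_add, Pi.sub_apply]
    congr 1
    ring
  have hYm : StronglyMeasurable[ℱ n] fun ω => exp (t * X n ω) :=
    continuous_exp.comp_stronglyMeasurable ((hX n).const_mul t)
  rw [hsplit]
  exact ⟨hint.mul_exp_mul_of_ae_le (hX.aestronglyMeasurable_succ_sub n) ht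
      (hdiff.mono fun _ hω => hω.2),
    integral_mul_exp_le_expChord_mul (ℱ.le n) hab ht hYm (fun _ => (exp_pos _).le) hint
      (hX.aestronglyMeasurable_succ_sub n) hdiff hdrift⟩

lemma integral_exp_mul_le_pow [IsProbabilityMeasure μ] (hX : StronglyAdapted ℱ X)
    (hX0 : ∀ ω, X 0 ω = x0) (hdiff : ∀ n, ∀ᵐ ω ∂μ, X (n + 1) ω - X n ω ∈ Icc a b)
    (hdrift : ∀ n, μ[X (n + 1) - X n|ℱ n] ≤ᵐ[μ] fun _ => δ) (hab : a ≤ b) (haδ : a ≤ δ)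
    (ht : 0 ≤ t) (n : ℕ) :
    Integrable (fun ω => exp (t * X n ω)) μ ∧
      ∫ ω, exp (t * X n ω) ∂μ ≤ exp (t * x0) * expChord a b t δ ^ n := by
  induction n with
  | zero => simp [hX0]
  | succ n ih =>
    obtain ⟨hint, hle⟩ := integral_exp_mul_succ_le hX hab ht n ih.1 (hdiff n) (hdrift n)
    refine ⟨hint, hle.trans ?_⟩
    calc expChord a b t δ * ∫ ω, exp (t * X n ω) ∂μ
        ≤ expChord a b t δ * (exp (t * x0) * expChord a b t δ ^ n) :=
          mul_le_mul_of_nonneg_left ih.2 (expChord_pos hab ht haδ).le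
      _ = exp (t * x0) * expChord a b t δ ^ (n + 1) := by ring

lemma measure_ge_le_exp_mul_pow [IsProbabilityMeasure μ] (hX : StronglyAdapted ℱ X)
    (hX0 : ∀ ω, X 0 ω = x0) (hdiff : ∀ n, ∀ᵐ ω ∂μ, X (n + 1) ω - X n ω ∈ Icc a b)
    (hdrift : ∀ n, μ[X (n + 1) - X n|ℱ n] ≤ᵐ[μ] fun _ => δ) (hab : a ≤ b) (haδ : a ≤ δ)
    (ht : 0 ≤ t) (c : ℝ) (n : ℕ) :
    μ {ω | c ≤ X n ω} ≤
      ENNReal.ofReal (exp (t * (x0 - c))) * ENNReal.ofReal (expChord a b t δ) ^ n := by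
  obtain ⟨hint, hle⟩ := integral_exp_mul_le_pow hX hX0 hdiff hdrift hab haδ ht n
  have hmarkov := ProbabilityTheory.measure_ge_le_exp_mul_mgf c ht hint
  rw [← ofReal_measureReal, ← ENNReal.ofReal_pow (expChord_pos hab ht haδ).le,
    ← ENNReal.ofReal_mul (exp_pos _).le]
  refine ENNReal.ofReal_le_ofReal (hmarkov.trans ?_)
  calc exp (-t * c) * ProbabilityTheory.mgf (X n) μ t
      ≤ exp (-t * c) * (exp (t * x0) * expChord a b t δ ^ n) := by
        gcongr
        exact hle
    _ = exp (t * (x0 - c)) * expChord a b t δ ^ n := by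
        rw [← mul_assoc, ← exp_add]
        congr 2
        ring

lemma tsum_measure_ge_ne_top [IsProbabilityMeasure μ] (hX : StronglyAdapted ℱ X)
    (hX0 : ∀ ω, X 0 ω = x0) (hdiff : ∀ n, ∀ᵐ ω ∂μ, X (n + 1) ω - X n ω ∈ Icc a b)
    (hdrift : ∀ n, μ[X (n + 1) - X n|ℱ n] ≤ᵐ[μ] fun _ => δ) (hab : a < b) (hδ : δ < 0)
    (c : ℝ) : ∑' n, μ {ω | c ≤ X n ω} ≠ ⊤ := by
  have haδ : a ≤ δ := le_of_ae_le_of_condExp_le (ℱ.le 0)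
    (.of_mem_Icc a b (hX.aestronglyMeasurable_succ_sub 0).aemeasurable (hdiff 0))
    ((hdiff 0).mono fun _ hω => hω.1) (hdrift 0)
  obtain ⟨t, ht, hq⟩ := exists_pos_expChord_lt_one hab hδ
  refine ne_top_of_le_ne_top ?_ <| ENNReal.tsum_le_tsum
    (measure_ge_le_exp_mul_pow hX hX0 hdiff hdrift hab.le haδ ht.le c)
  rw [ENNReal.tsum_mul_left, ENNReal.tsum_geometric]
  exact ENNReal.mul_ne_top ENNReal.ofReal_ne_top
    (ENNReal.inv_ne_top.2 (tsub_pos_of_lt (ENNReal.ofReal_lt_one.2 hq)).ne')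

end Increments

lemma measure_ge_comp_le_tsum {Ω : Type*} {m0 : MeasurableSpace Ω} {μ : Measure Ω}
    {X : ℕ → Ω → ℝ} {τ : Ω → ℕ} {n : ℕ} (hτ : ∀ᵐ ω ∂μ, n ≤ τ ω) (c : ℝ) :
    μ {ω | c ≤ X (τ ω) ω} ≤ ∑' k, μ {ω | c ≤ X (n + k) ω} := by
  refine (measure_mono_ae ?_).trans (measure_iUnion_le _)
  filter_upwards [hτ] with ω hω hc
  exact mem_iUnion.2 ⟨τ ω - n, by rwa [Nat.add_sub_cancel' hω]⟩

theorem stmt12_general {Ω : Type*} {m0 : MeasurableSpace Ω} {μ : Measure Ω} [IsProbabilityMeasure μ]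
    (ℱ : Filtration ℕ m0) (X : ℕ → Ω → ℝ) (a b ε x0 : ℝ)
    (hab : a < b) (hε : 0 < ε)
    (hsm : Supermartingale X ℱ μ)
    (hX0 : ∀ ω, X 0 ω = x0)
    (hdec : ∀ n, μ[X (n + 1)|ℱ n] ≤ᵐ[μ] fun ω => X n ω - ε)
    (hdiff : ∀ n, ∀ᵐ ω ∂μ, X (n + 1) ω - X n ω ∈ Set.Icc a b)
    (B : ℕ → Ω → ℕ)
    (hBge : ∀ n, ∀ᵐ ω ∂μ, n ≤ B n ω) :
    ∀ c : ℝ,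
      (∀ n : ℕ, μ {ω | c ≤ X (B n ω) ω} ≤ ∑' k : ℕ, μ {ω | c ≤ X (n + k) ω}) ∧
      Tendsto (fun n : ℕ => μ {ω | c ≤ X (B n ω) ω}) atTop (𝓝 (0 : ENNReal)) := by
  intro c
  have hdrift (n : ℕ) : μ[X (n + 1) - X n|ℱ n] ≤ᵐ[μ] fun _ => -ε :=
    condExp_sub_le_of_ae_le_of_condExp_le (ℱ.le n) (hsm.integrable _) (hsm.stronglyAdapted n)
      (hsm.integrable n) (hdec n)
  have hsum :=
    tsum_measure_ge_ne_top hsm.stronglyAdapted hX0 hdiff hdrift hab (neg_neg_of_pos hε) c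
  have hbound (n : ℕ) := measure_ge_comp_le_tsum (X := X) (hBge n) c
  refine ⟨hbound, tendsto_of_tendsto_of_tendsto_of_le_of_le tendsto_const_nhds ?_
    (fun _ => zero_le) hbound⟩
  simpa only [add_comm] using ENNReal.tendsto_sum_nat_add _ hsum

/-- Let `{X n}` be a stochastic process adapted to a filtration `ℱ`, with `X 0`
constant, `E[X (n+1) | ℱ n] ≤ X n - ε` a.s. (`ε > 0`) and `X (n+1) - X n ∈ [a, b]` a.s.
(`a < b`).  Let `{B n}` be a strictly increasing sequence of `ℕ`-valued random variables with
`B n ≥ n` a.s.  Then for any `c ∈ ℝ`, `P(X (B n) ≥ c) ≤ ∑_{k=n}^∞ P(X k ≥ c)` and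
consequently `lim_{n→∞} P(X (B n) ≥ c) = 0`. -/
theorem stmt12 {Ω : Type*} {m0 : MeasurableSpace Ω} {μ : Measure Ω} [IsProbabilityMeasure μ]
    (ℱ : Filtration ℕ m0) (X : ℕ → Ω → ℝ) (a b ε x0 : ℝ)
    (hab : a < b) (hε : 0 < ε)
    (hsm : Supermartingale X ℱ μ)
    (hX0 : ∀ ω, X 0 ω = x0)
    (hdec : ∀ n, μ[X (n + 1)|ℱ n] ≤ᵐ[μ] fun ω => X n ω - ε)
    (hdiff : ∀ n, ∀ᵐ ω ∂μ, X (n + 1) ω - X n ω ∈ Set.Icc a b)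
    (B : ℕ → Ω → ℕ)
    (hBmeas : ∀ n, Measurable (B n))
    (hBmono : ∀ᵐ ω ∂μ, StrictMono fun n => B n ω)
    (hBge : ∀ n, ∀ᵐ ω ∂μ, n ≤ B n ω) :
    ∀ c : ℝ,
      (∀ n : ℕ, μ {ω | c ≤ X (B n ω) ω} ≤ ∑' k : ℕ, μ {ω | c ≤ X (n + k) ω}) ∧
      Tendsto (fun n : ℕ => μ {ω | c ≤ X (B n ω) ω}) atTop (𝓝 (0 : ENNReal)) :=
  stmt12_general ℱ X a b ε x0 hab hε hsm hX0 hdec hdiff B hBge
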